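/- Assume A is indecomposable and the Weyl group W is infinite. Let ω ∈ W be such that ℓ(ω^l) = |l|·ℓ(ω) for all l ∈ ℤ, and let β be a real root belonging to Δ₊ such that ωβ ∈ Δ₋. Then for every integer l, ω^l β ∈ Δ₋ if and only if l ≥ 1. -/

import Mathlib

open Matrix Filter Pointwise

namespace KacMoodyPaper

variable {n : ℕ}

/-- `A` is a generalized Cartan matrix. -/
def IsGCM (A : Matrix (Fin n) (Fin n) ℤ) : Prop :=
  (∀ i, A i i = 2) ∧ (∀ i j, i ≠ j → A i j ≤ 0) ∧ (∀ i j, A i j = 0 ↔ A j i = 0)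

/-- The simple reflection `s i` as a linear map: `s i v = v - (A *ᵥ v) i • e i`. -/
def sMap (A : Matrix (Fin n) (Fin n) ℤ) (i : Fin n) : (Fin n → ℤ) →ₗ[ℤ] (Fin n → ℤ) where
  toFun v := v - (A.mulVec v i) • Pi.single i 1
  map_add' x y := by
    simp only [Matrix.mulVec_add, Pi.add_apply, add_smul]
    abel
  map_smul' c x := by
    simp only [Matrix.mulVec_smul, Pi.smul_apply, smul_eq_mul, RingHom.id_apply, smul_sub,
      smul_smul]

theorem sMap_involutive (A : Matrix (Fin n) (Fin n) ℤ) (i : Fin n) (h2 : A i i = 2)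
    (v : Fin n → ℤ) : sMap A i (sMap A i v) = v := by
  have hAe : A.mulVec (Pi.single i 1) i = A i i := by
    simp [Matrix.mulVec_single]
  simp only [sMap, LinearMap.coe_mk, AddHom.coe_mk, Matrix.mulVec_sub, Matrix.mulVec_smul,
    Pi.sub_apply, Pi.smul_apply, hAe, h2, smul_eq_mul]
  ring_nf

/-- The simple reflection `s i` as a `ℤ`-linear automorphism of `ℤ^n`
(determined by `s i (e j) = e j - A i j • e i`). -/
def s (A : Matrix (Fin n) (Fin n) ℤ) (h2 : ∀ i, A i i = 2) (i : Fin n) :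
    (Fin n → ℤ) ≃ₗ[ℤ] (Fin n → ℤ) :=
  LinearEquiv.ofLinear (sMap A i) (sMap A i)
    (LinearMap.ext fun v => sMap_involutive A i (h2 i) v)
    (LinearMap.ext fun v => sMap_involutive A i (h2 i) v)

/-- The Coxeter element `w = s 1 ∘ s 2 ∘ ⋯ ∘ s n` (applying `s n` first). -/
def cox (A : Matrix (Fin n) (Fin n) ℤ) (h2 : ∀ i, A i i = 2) :
    (Fin n → ℤ) ≃ₗ[ℤ] (Fin n → ℤ) :=
  (List.ofFn (fun i : Fin n => s A h2 i)).prod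

/-- The Weyl group: the subgroup of `GL(n, ℤ)` generated by the simple reflections. -/
def weyl (A : Matrix (Fin n) (Fin n) ℤ) (h2 : ∀ i, A i i = 2) :
    Subgroup ((Fin n → ℤ) ≃ₗ[ℤ] (Fin n → ℤ)) :=
  Subgroup.closure (Set.range (s A h2))

/-- The word length of `ω` with respect to the generators `s 1, …, s n`. -/
noncomputable def len (A : Matrix (Fin n) (Fin n) ℤ) (h2 : ∀ i, A i i = 2)
    (ω : (Fin n → ℤ) ≃ₗ[ℤ] (Fin n → ℤ)) : ℕ :=
  sInf {k | ∃ f : Fin k → Fin n, ω = (List.ofFn (fun j => s A h2 (f j))).prod}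

/-- `v ∈ ℤ^n` is positive: nonzero with all coordinates `≥ 0`. -/
def IsPos (v : Fin n → ℤ) : Prop := v ≠ 0 ∧ ∀ i, 0 ≤ v i

/-- The height of a vector: the sum of its coordinates. -/
def ht (v : Fin n → ℤ) : ℤ := ∑ i, v i

/-- The graph `Γ` on `{1, …, n}` with an edge between `i ≠ j` iff `A i j ≠ 0`. -/
def gcmGraph (A : Matrix (Fin n) (Fin n) ℤ) (hsym : ∀ i j, A i j = 0 ↔ A j i = 0) :
    SimpleGraph (Fin n) where
  Adj i j := i ≠ j ∧ A i j ≠ 0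
  symm := by
    constructor
    rintro i j ⟨hij, h⟩
    exact ⟨hij.symm, fun h0 => h ((hsym i j).mpr h0)⟩
  loopless := by constructor; rintro i ⟨h, -⟩; exact h rfl

/-- `A` is indecomposable: the graph `Γ` is connected. -/
def Indecomposable (A : Matrix (Fin n) (Fin n) ℤ) (hsym : ∀ i j, A i j = 0 ↔ A j i = 0) :
    Prop :=
  (gcmGraph A hsym).Connected

/-- `A` is of indefinite type: there is `u > 0` (componentwise) with `A·u < 0` componentwise. -/
def IndefiniteType (A : Matrix (Fin n) (Fin n) ℤ) : Prop :=
  ∃ u : Fin n → ℤ, (∀ i, 0 < u i) ∧ ∀ i, (A.mulVec u) i < 0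

/-- The fundamental set `K`: positive vectors with connected support and `A·v ≤ 0`. -/
def fundK (A : Matrix (Fin n) (Fin n) ℤ) (hsym : ∀ i j, A i j = 0 ↔ A j i = 0) :
    Set (Fin n → ℤ) :=
  {v | IsPos v ∧ ((gcmGraph A hsym).induce {i | v i ≠ 0}).Connected ∧
    ∀ i, (A.mulVec v) i ≤ 0}

/-- The real roots: the `W`-orbits of the standard basis vectors. -/
def realRoots (A : Matrix (Fin n) (Fin n) ℤ) (h2 : ∀ i, A i i = 2) : Set (Fin n → ℤ) :=
  {v | ∃ g ∈ weyl A h2, ∃ i : Fin n, v = g (Pi.single i 1)}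

/-- The positive imaginary roots: the `W`-orbit of the fundamental set `K`. -/
def posImRoots (A : Matrix (Fin n) (Fin n) ℤ) (h2 : ∀ i, A i i = 2)
    (hsym : ∀ i j, A i j = 0 ↔ A j i = 0) : Set (Fin n → ℤ) :=
  {v | ∃ g ∈ weyl A h2, ∃ k ∈ fundK A hsym, v = g k}

/-- The set of roots `Δ`. -/
def roots (A : Matrix (Fin n) (Fin n) ℤ) (h2 : ∀ i, A i i = 2)
    (hsym : ∀ i j, A i j = 0 ↔ A j i = 0) : Set (Fin n → ℤ) :=
  realRoots A h2 ∪ posImRoots A h2 hsym ∪ (-(posImRoots A h2 hsym))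

/-- The set of positive roots `Δ₊`. -/
def posRoots (A : Matrix (Fin n) (Fin n) ℤ) (h2 : ∀ i, A i i = 2)
    (hsym : ∀ i j, A i j = 0 ↔ A j i = 0) : Set (Fin n → ℤ) :=
  {v ∈ roots A h2 hsym | IsPos v}

/-- The set of negative roots `Δ₋ = -Δ₊`. -/
def negRoots (A : Matrix (Fin n) (Fin n) ℤ) (h2 : ∀ i, A i i = 2)
    (hsym : ∀ i j, A i j = 0 ↔ A j i = 0) : Set (Fin n → ℤ) :=
  -(posRoots A h2 hsym)

/-!
Let `N(w)` be the set of positive real roots that `w` sends to negative ones. If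
`ℓ(u v) = ℓ(u) + ℓ(v)` then `N(v) ⊆ N(u v)`. As `ℓ(ω^(m+1)) = ℓ(ω^m) + ℓ(ω)`, applying this to
`ω^m · ω` gives `β ∈ N(ω^(m+1))`. If `ω^(-m) β` were negative for some `m ≥ 0`, then
`γ = -ω^(-m) β` would lie in `N(ω^m) ⊆ N(ω · ω^m)`, so `ω^(m+1) γ = -ω β` would be negative.

The inclusion follows by induction on `ℓ(v)`, peeling off a right descent `s j` of `v`, from
the dichotomy `ℓ(w s_i) > ℓ(w) → w e_i ≥ 0`, which makes every real root positive or negative.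
That is proved as in Humphreys, *Reflection Groups and Coxeter Groups*, Thm. 5.4: write
`w = v u` with `u` in the dihedral subgroup `⟨s_i, s_j⟩` and `v` of minimal length, and check
the rank-2 case by hand. If `A_ij A_ji ≥ 4` the orbit of `e_i` stays in the positive quadrant;
otherwise a braid relation bounds the length of reduced alternating words.
-/

local notation "G" => (Fin n → ℤ) ≃ₗ[ℤ] (Fin n → ℤ)

section Words

variable (A : Matrix (Fin n) (Fin n) ℤ) (h2 : ∀ i, A i i = 2)

def word (L : List (Fin n)) : G := (L.map (s A h2)).prod

/-- Junk value `0` when `w` is not a product of the `s i` with `i ∈ S`. -/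
noncomputable def lenIn (S : Set (Fin n)) (w : G) : ℕ :=
  sInf {k | ∃ L : List (Fin n), (∀ x ∈ L, x ∈ S) ∧ L.length = k ∧ word A h2 L = w}

variable {A}

lemma s_apply (i : Fin n) (v : Fin n → ℤ) :
    s A h2 i v = v - A.mulVec v i • Pi.single i 1 := rfl

@[simp]
lemma s_mul_self (i : Fin n) : s A h2 i * s A h2 i = 1 :=
  LinearEquiv.ext (sMap_involutive A i (h2 i))

@[simp]
lemma mul_s_mul_s (w : G) (i : Fin n) : w * s A h2 i * s A h2 i = w := by
  rw [mul_assoc, s_mul_self, mul_one]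

lemma s_single_self (i : Fin n) : s A h2 i (Pi.single i 1) = -Pi.single i 1 := by
  rw [s_apply, Matrix.mulVec_single_one, Matrix.col_apply, h2]
  module

lemma det_s (i : Fin n) : LinearEquiv.det (s A h2 i) = -1 := by
  have hs : (s A h2 i : (Fin n → ℤ) →ₗ[ℤ] (Fin n → ℤ)) = Matrix.toLin'
      (1 + replicateCol Unit (-Pi.single i (1 : ℤ)) * replicateRow Unit (A i)) := by
    ext v p
    simp [s_apply, Matrix.mulVec, dotProduct, Pi.single_apply, sub_eq_add_neg]
  ext1
  rw [LinearEquiv.coe_det, hs, LinearMap.det_toLin', det_one_add_replicateCol_mul_replicateRow]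
  simp [h2]

lemma s_mem_weyl (i : Fin n) : s A h2 i ∈ weyl A h2 :=
  Subgroup.subset_closure ⟨i, rfl⟩

@[simp] lemma word_nil : word A h2 [] = 1 := rfl

@[simp] lemma word_cons (i : Fin n) (L : List (Fin n)) :
    word A h2 (i :: L) = s A h2 i * word A h2 L := List.prod_cons

@[simp] lemma word_append (L M : List (Fin n)) :
    word A h2 (L ++ M) = word A h2 L * word A h2 M := by simp [word]

@[simp] lemma word_singleton (i : Fin n) : word A h2 [i] = s A h2 i := by simp [word]

lemma word_mem_weyl (L : List (Fin n)) : word A h2 L ∈ weyl A h2 :=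
  Subgroup.list_prod_mem _ (by simpa using fun i _ => s_mem_weyl h2 i)

lemma inv_word (L : List (Fin n)) : (word A h2 L)⁻¹ = word A h2 L.reverse := by
  have hs (i : Fin n) : (s A h2 i)⁻¹ = s A h2 i := inv_eq_of_mul_eq_one_right (s_mul_self h2 i)
  simp [word, List.prod_inv_reverse, List.map_reverse, Function.comp_def, hs]

lemma mem_weyl_iff {w : G} : w ∈ weyl A h2 ↔ ∃ L, word A h2 L = w := by
  refine ⟨fun hw => ?_, fun ⟨L, hL⟩ => hL ▸ word_mem_weyl h2 L⟩
  induction hw using Subgroup.closure_induction with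
  | mem _ hx => obtain ⟨i, rfl⟩ := hx; exact ⟨[i], word_singleton h2 i⟩
  | one => exact ⟨[], rfl⟩
  | mul _ _ _ _ hu hv =>
    obtain ⟨L, rfl⟩ := hu
    obtain ⟨M, rfl⟩ := hv
    exact ⟨L ++ M, word_append h2 L M⟩
  | inv _ _ hu => obtain ⟨L, rfl⟩ := hu; exact ⟨L.reverse, (inv_word h2 L).symm⟩

lemma det_word (L : List (Fin n)) : LinearEquiv.det (word A h2 L) = (-1) ^ L.length := by
  simp [word, map_list_prod, Function.comp_def, det_s]

section lenIn

variable {S : Set (Fin n)} {L M : List (Fin n)}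

lemma lenIn_word_le (hL : ∀ x ∈ L, x ∈ S) : lenIn A h2 S (word A h2 L) ≤ L.length :=
  Nat.sInf_le ⟨L, hL, rfl, rfl⟩

lemma exists_reduced_word (hL : ∀ x ∈ L, x ∈ S) :
    ∃ M, (∀ x ∈ M, x ∈ S) ∧ M.length = lenIn A h2 S (word A h2 L) ∧
      word A h2 M = word A h2 L :=
  Nat.sInf_mem
    (s := {k | ∃ M : List (Fin n), (∀ x ∈ M, x ∈ S) ∧ M.length = k ∧ word A h2 M = word A h2 L})
    ⟨_, L, hL, rfl, rfl⟩

lemma lenIn_mono {T : Set (Fin n)} (hST : S ⊆ T) (hL : ∀ x ∈ L, x ∈ S) :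
    lenIn A h2 T (word A h2 L) ≤ lenIn A h2 S (word A h2 L) := by
  obtain ⟨M, hMS, hM, hML⟩ := exists_reduced_word h2 hL
  rw [← hM, ← hML]
  exact lenIn_word_le h2 fun x hx => hST (hMS x hx)

lemma lenIn_mul_le (hL : ∀ x ∈ L, x ∈ S) (hM : ∀ x ∈ M, x ∈ S) :
    lenIn A h2 S (word A h2 L * word A h2 M) ≤
      lenIn A h2 S (word A h2 L) + lenIn A h2 S (word A h2 M) := by
  obtain ⟨L', hL'S, hL', hL'L⟩ := exists_reduced_word h2 hL
  obtain ⟨M', hM'S, hM', hM'M⟩ := exists_reduced_word h2 hM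
  rw [← hL', ← hM', ← hL'L, ← hM'M, ← word_append, ← List.length_append]
  exact lenIn_word_le h2 (List.forall_mem_append.mpr ⟨hL'S, hM'S⟩)

lemma lenIn_s_le_one {i : Fin n} (hi : i ∈ S) : lenIn A h2 S (s A h2 i) ≤ 1 := by
  simpa using lenIn_word_le h2 (L := [i]) (by simpa)

lemma neg_one_pow_lenIn (hL : ∀ x ∈ L, x ∈ S) :
    (-1) ^ lenIn A h2 S (word A h2 L) = LinearEquiv.det (word A h2 L) := by
  obtain ⟨M, -, hM, hML⟩ := exists_reduced_word h2 hL
  rw [← hML, det_word, hM, hML]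

lemma lenIn_mul_s_ne {i : Fin n} (hL : ∀ x ∈ L, x ∈ S) (hi : i ∈ S) :
    lenIn A h2 S (word A h2 L * s A h2 i) ≠ lenIn A h2 S (word A h2 L) := by
  intro h
  have hLi := neg_one_pow_lenIn h2 (L := L ++ [i]) (List.forall_mem_append.mpr ⟨hL, by simpa⟩)
  rw [word_append, word_singleton, h, neg_one_pow_lenIn h2 hL, map_mul, det_s] at hLi
  simp at hLi

lemma lenIn_mul_s_eq {i : Fin n} (hL : ∀ x ∈ L, x ∈ S) (hi : i ∈ S) :
    lenIn A h2 S (word A h2 L * s A h2 i) = lenIn A h2 S (word A h2 L) + 1 ∨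
      lenIn A h2 S (word A h2 L * s A h2 i) + 1 = lenIn A h2 S (word A h2 L) := by
  have hup := lenIn_mul_le h2 hL (M := [i]) (by simpa)
  have hdown := lenIn_mul_le h2 (L := L ++ [i]) (M := [i])
    (List.forall_mem_append.mpr ⟨hL, by simpa⟩) (by simpa)
  simp only [word_append, word_singleton, mul_s_mul_s] at hup hdown
  have := lenIn_s_le_one h2 hi
  have := lenIn_mul_s_ne h2 hL hi
  omega

lemma isChain_ne_of_lenIn_eq (hL : ∀ x ∈ L, x ∈ S)
    (hred : lenIn A h2 S (word A h2 L) = L.length) : L.IsChain (· ≠ ·) := by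
  refine List.isChain_iff_forall_rel_of_append_cons_cons.mpr ?_
  rintro a b l₁ l₂ rfl rfl
  have hshort := lenIn_word_le h2 (S := S) (L := l₁ ++ l₂) (by simp_all [or_imp, forall_and])
  have hcancel : word A h2 (l₁ ++ a :: a :: l₂) = word A h2 (l₁ ++ l₂) := by
    simp [← mul_assoc]
  simp only [hcancel, List.length_append, List.length_cons] at hred hshort
  omega

end lenIn

lemma len_eq_lenIn_univ (w : G) : len A h2 w = lenIn A h2 Set.univ w := by
  unfold len lenIn
  congr 1
  ext k
  constructor
  · rintro ⟨f, rfl⟩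
    exact ⟨List.ofFn f, by simp, List.length_ofFn, by simp [word, List.map_ofFn]; rfl⟩
  · rintro ⟨L, -, rfl, rfl⟩
    refine ⟨L.get, ?_⟩
    rw [word, ← List.ofFn_get L, List.map_ofFn, List.ofFn_get]
    rfl

lemma len_word_le (L : List (Fin n)) : len A h2 (word A h2 L) ≤ L.length := by
  rw [len_eq_lenIn_univ]
  exact lenIn_word_le h2 (by simp)

lemma len_le_lenIn {S : Set (Fin n)} {L : List (Fin n)} (hL : ∀ x ∈ L, x ∈ S) :
    len A h2 (word A h2 L) ≤ lenIn A h2 S (word A h2 L) := by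
  rw [len_eq_lenIn_univ]
  exact lenIn_mono h2 (Set.subset_univ S) hL

lemma exists_word_len {w : G} (hw : w ∈ weyl A h2) :
    ∃ L, L.length = len A h2 w ∧ word A h2 L = w := by
  obtain ⟨L, rfl⟩ := (mem_weyl_iff h2).mp hw
  obtain ⟨M, -, hM, hML⟩ := exists_reduced_word h2 (S := Set.univ) (L := L) (by simp)
  exact ⟨M, by rw [hM, len_eq_lenIn_univ], hML⟩

lemma len_mul_le {u v : G} (hu : u ∈ weyl A h2) (hv : v ∈ weyl A h2) :
    len A h2 (u * v) ≤ len A h2 u + len A h2 v := by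
  obtain ⟨L, rfl⟩ := (mem_weyl_iff h2).mp hu
  obtain ⟨M, rfl⟩ := (mem_weyl_iff h2).mp hv
  simp only [len_eq_lenIn_univ]
  exact lenIn_mul_le h2 (by simp) (by simp)

lemma len_mul_s_eq {w : G} (hw : w ∈ weyl A h2) (i : Fin n) :
    len A h2 (w * s A h2 i) = len A h2 w + 1 ∨ len A h2 (w * s A h2 i) + 1 = len A h2 w := by
  obtain ⟨L, rfl⟩ := (mem_weyl_iff h2).mp hw
  simp only [len_eq_lenIn_univ]
  exact lenIn_mul_s_eq h2 (by simp) (Set.mem_univ i)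

lemma exists_len_mul_s_lt {w : G} (hw : w ∈ weyl A h2) (hw1 : w ≠ 1) :
    ∃ j, len A h2 (w * s A h2 j) + 1 = len A h2 w := by
  obtain ⟨L, hL, rfl⟩ := exists_word_len h2 hw
  obtain ⟨L, j, rfl⟩ := L.eq_nil_or_concat.resolve_left (by rintro rfl; exact hw1 rfl)
  refine ⟨j, ?_⟩
  simp only [List.concat_eq_append, word_append, word_singleton, mul_s_mul_s,
    List.length_append, List.length_singleton] at hL ⊢
  have := len_word_le h2 L
  have := len_mul_s_eq h2 (word_mem_weyl h2 L) j
  omega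

end Words

section Alternating

variable {α : Type*}

def altList (x y : α) : ℕ → List α
  | 0 => []
  | m + 1 => altList y x m ++ [x]

@[simp]
lemma length_altList (x y : α) (m : ℕ) : (altList x y m).length = m := by
  induction m generalizing x y with
  | zero => rfl
  | succ m ih => simp [altList, ih]

lemma altList_succ_eq_cons (x y : α) (m : ℕ) :
    altList x y (m + 1) = (if Even m then x else y) :: altList x y m := by
  induction m generalizing x y with
  | zero => rfl
  | succ m ih =>
    rw [altList, ih, altList]
    by_cases h : Even m <;> simp [h, Nat.even_add_one]

lemma exists_altList_add (x y : α) (p q : ℕ) :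
    ∃ x' y', altList x y (p + q) = altList x' y' p ++ altList x y q := by
  induction q generalizing x y with
  | zero => exact ⟨x, y, by simp [altList]⟩
  | succ q ih =>
    obtain ⟨x', y', h⟩ := ih y x
    exact ⟨x', y', by rw [← add_assoc, altList, h, altList, List.append_assoc]⟩

lemma mem_altList {x y z : α} {m : ℕ} (hz : z ∈ altList x y m) : z = x ∨ z = y := by
  induction m generalizing x y with
  | zero => simp [altList] at hz
  | succ m ih =>
    rcases List.mem_append.mp hz with hz | hz
    · exact (ih hz).symm
    · exact Or.inl (List.mem_singleton.mp hz)

lemma eq_altList_of_isChain {x y : α} {L : List α} (hL : (L ++ [x]).IsChain (· ≠ ·))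
    (hxy : ∀ z ∈ L, z = x ∨ z = y) : L ++ [x] = altList x y (L.length + 1) := by
  induction L using List.reverseRecOn generalizing x y with
  | nil => rfl
  | append_singleton L c ih =>
    have hc : c ≠ x := (List.isChain_append.mp hL).2.2 c (by simp) x (by simp)
    obtain rfl : c = y := (hxy c (by simp)).resolve_left hc
    have hL' := ih (List.isChain_append.mp hL).1 fun z hz =>
      (hxy z (List.mem_append_left _ hz)).symm
    rw [List.length_append, List.length_singleton, altList, ← hL']

end Alternating

/-- The coordinates of `word A h2 (altList j i m) (e i)` in the basis `e i, e j`, for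
`a = -A i j` and `b = -A j i`. -/
def dihedralOrbit (a b : ℤ) : ℕ → ℤ × ℤ
  | 0 => (1, 0)
  | m + 1 =>
    let p := dihedralOrbit a b m
    if Even m then (p.1, b * p.1 - p.2) else (a * p.2 - p.1, p.2)

lemma dihedralOrbit_nonneg {a b : ℤ} (ha : 0 ≤ a) (hb : 0 ≤ b) (hab : 4 ≤ a * b) (m : ℕ) :
    0 ≤ (dihedralOrbit a b m).1 ∧ 0 ≤ (dihedralOrbit a b m).2 := by
  -- invariant: the next reflection does not decrease the coordinate it changes
  suffices ∀ m, 0 ≤ (dihedralOrbit a b m).1 ∧ 0 ≤ (dihedralOrbit a b m).2 ∧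
      if Even m then 2 * (dihedralOrbit a b m).2 ≤ b * (dihedralOrbit a b m).1
      else 2 * (dihedralOrbit a b m).1 ≤ a * (dihedralOrbit a b m).2 from
    ⟨(this m).1, (this m).2.1⟩
  intro m
  induction m with
  | zero => simp [dihedralOrbit, hb]
  | succ m ih =>
    obtain ⟨hx, hy, hinv⟩ := ih
    by_cases hm : Even m
    · simp only [hm, if_true] at hinv
      simp only [dihedralOrbit, hm, if_true, Nat.even_add_one, not_true, if_false]
      exact ⟨hx, by nlinarith, by nlinarith⟩
    · simp only [hm, if_false] at hinv
      simp only [dihedralOrbit, hm, if_false, Nat.even_add_one, not_false_eq_true, if_true]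
      exact ⟨by nlinarith, hy, by nlinarith⟩

lemma cartan_pair_cases {a b : ℤ} (ha : a ≤ 0) (hb : b ≤ 0) (hab0 : a = 0 ↔ b = 0)
    (hab : a * b ≤ 3) :
    a = 0 ∧ b = 0 ∨ a = -1 ∧ b = -1 ∨ a = -1 ∧ b = -2 ∨ a = -2 ∧ b = -1 ∨
      a = -1 ∧ b = -3 ∨ a = -3 ∧ b = -1 := by
  by_cases h0 : a = 0
  · exact Or.inl ⟨h0, hab0.mp h0⟩
  have ha1 : a ≤ -1 := by omega
  have hb1 : b ≤ -1 := by have := mt hab0.mpr h0; omega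
  have : -3 ≤ a := by nlinarith
  have : -3 ≤ b := by nlinarith
  interval_cases a <;> interval_cases b <;> simp_all

section Dihedral

variable {A : Matrix (Fin n) (Fin n) ℤ} (h2 : ∀ i, A i i = 2) (i j : Fin n)

lemma s_apply_plane_fst (v : Fin n → ℤ) (x y : ℤ) :
    s A h2 i (v + x • Pi.single i 1 + y • Pi.single j 1) =
      v + (-A.mulVec v i - x - A i j * y) • Pi.single i 1 + y • Pi.single j 1 := by
  simp only [s_apply, Matrix.mulVec_add, Matrix.mulVec_smul, Matrix.mulVec_single_one,
    Pi.add_apply, Pi.smul_apply, Matrix.col_apply, h2, smul_eq_mul]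
  module

lemma s_apply_plane_snd (v : Fin n → ℤ) (x y : ℤ) :
    s A h2 j (v + x • Pi.single i 1 + y • Pi.single j 1) =
      v + x • Pi.single i 1 + (-A.mulVec v j - A j i * x - y) • Pi.single j 1 := by
  simp only [s_apply, Matrix.mulVec_add, Matrix.mulVec_smul, Matrix.mulVec_single_one,
    Pi.add_apply, Pi.smul_apply, Matrix.col_apply, h2, smul_eq_mul]
  module

lemma word_altList_apply_single (m : ℕ) :
    word A h2 (altList j i m) (Pi.single i 1) =
      (dihedralOrbit (-A i j) (-A j i) m).1 • Pi.single i 1 +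
        (dihedralOrbit (-A i j) (-A j i) m).2 • Pi.single j 1 := by
  induction m with
  | zero => simp [altList, dihedralOrbit]
  | succ m ih =>
    rw [altList_succ_eq_cons, word_cons, LinearEquiv.mul_apply, ih,
      ← zero_add ((dihedralOrbit (-A i j) (-A j i) m).1 • Pi.single i 1)]
    by_cases hm : Even m
    · simp only [hm, if_true, dihedralOrbit, s_apply_plane_snd, Matrix.mulVec_zero, Pi.zero_apply]
      module
    · simp only [hm, if_false, dihedralOrbit, s_apply_plane_fst, Matrix.mulVec_zero, Pi.zero_apply]
      module

/-- The finite dihedral cases: `h` is the order of `s i * s j`. -/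
lemma exists_braid_of_mul_le_three (hA : IsGCM A) (hij : i ≠ j) (hab : A i j * A j i ≤ 3) :
    ∃ h, 0 < h ∧ word A hA.1 (altList j i h) = word A hA.1 (altList i j h) ∧
      ∀ k < h, 0 ≤ (dihedralOrbit (-A i j) (-A j i) k).1 ∧
        0 ≤ (dihedralOrbit (-A i j) (-A j i) k).2 := by
  rcases cartan_pair_cases (hA.2.1 i j hij) (hA.2.1 j i hij.symm) (hA.2.2 i j) hab with
    ⟨ha, hb⟩ | ⟨ha, hb⟩ | ⟨ha, hb⟩ | ⟨ha, hb⟩ | ⟨ha, hb⟩ | ⟨ha, hb⟩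
  on_goal 1 => refine ⟨2, by norm_num, ?_, by simp only [ha, hb]; decide⟩
  on_goal 2 => refine ⟨3, by norm_num, ?_, by simp only [ha, hb]; decide⟩
  on_goal 3 => refine ⟨4, by norm_num, ?_, by simp only [ha, hb]; decide⟩
  on_goal 4 => refine ⟨4, by norm_num, ?_, by simp only [ha, hb]; decide⟩
  on_goal 5 => refine ⟨6, by norm_num, ?_, by simp only [ha, hb]; decide⟩
  on_goal 6 => refine ⟨6, by norm_num, ?_, by simp only [ha, hb]; decide⟩
  all_goals
    ext1 v
    rw [show v = v + (0 : ℤ) • Pi.single i 1 + (0 : ℤ) • Pi.single j 1 by simp]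
    simp only [altList, word_append, word_singleton, List.nil_append, LinearEquiv.mul_apply,
      s_apply_plane_fst, s_apply_plane_snd, ha, hb]
    module

lemma lenIn_word_altList_mul_s_lt {h m : ℕ} (hh : 0 < h) (hm : h ≤ m)
    (hbraid : word A h2 (altList j i h) = word A h2 (altList i j h)) :
    lenIn A h2 {i, j} (word A h2 (altList j i m) * s A h2 i) < m := by
  obtain ⟨x, y, hsplit⟩ := exists_altList_add j i (m - h) h
  rw [Nat.sub_add_cancel hm] at hsplit
  obtain ⟨h, rfl⟩ := Nat.exists_eq_add_one_of_ne_zero hh.ne'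
  set P := altList x y (m - (h + 1))
  have hword : word A h2 (altList j i m) * s A h2 i = word A h2 (P ++ altList j i h) := by
    rw [hsplit, word_append, hbraid, altList, word_append, word_append, word_singleton]
    simp [mul_assoc]
  have hS : ∀ z ∈ P ++ altList j i h, z ∈ ({i, j} : Set (Fin n)) := by
    intro z hz
    have hz' : z ∈ altList j i m ∨ z ∈ altList j i h := by
      rw [hsplit]
      exact (List.mem_append.mp hz).imp_left (List.mem_append_left _)
    rcases hz'.elim mem_altList mem_altList with rfl | rfl <;> simp
  calc _ ≤ (P ++ altList j i h).length := hword ▸ lenIn_word_le h2 hS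
    _ < m := by simp [P]; omega

lemma dihedralOrbit_nonneg_of_lt_lenIn (hA : IsGCM A) (hij : i ≠ j) {m : ℕ}
    (hm : m < lenIn A hA.1 {i, j} (word A hA.1 (altList j i m) * s A hA.1 i)) :
    0 ≤ (dihedralOrbit (-A i j) (-A j i) m).1 ∧ 0 ≤ (dihedralOrbit (-A i j) (-A j i) m).2 := by
  by_cases hab : 4 ≤ A i j * A j i
  · refine dihedralOrbit_nonneg ?_ ?_ (by rwa [neg_mul_neg]) m
    · linarith [hA.2.1 i j hij]
    · linarith [hA.2.1 j i hij.symm]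
  · obtain ⟨h, hh, hbraid, hpos⟩ := exists_braid_of_mul_le_three i j hA hij (by omega)
    refine hpos m (lt_of_not_ge fun hhm => ?_)
    have := lenIn_word_altList_mul_s_lt hA.1 i j hh hhm hbraid
    omega

theorem exists_nonneg_word_apply_single (hA : IsGCM A) (hij : i ≠ j) {L : List (Fin n)}
    (hL : ∀ x ∈ L, x ∈ ({i, j} : Set (Fin n)))
    (hlt : lenIn A hA.1 {i, j} (word A hA.1 L) <
      lenIn A hA.1 {i, j} (word A hA.1 L * s A hA.1 i)) :
    ∃ p q : ℤ, 0 ≤ p ∧ 0 ≤ q ∧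
      word A hA.1 L (Pi.single i 1) = p • Pi.single i 1 + q • Pi.single j 1 := by
  obtain ⟨M, hMS, hM, hML⟩ := exists_reduced_word hA.1 hL
  rw [← hM, ← hML] at hlt
  rw [← hML]
  obtain rfl | ⟨M, z, rfl⟩ := M.eq_nil_or_concat
  · exact ⟨1, 0, zero_le_one, le_rfl, by simp⟩
  rw [List.concat_eq_append] at hMS hM hML hlt ⊢
  have hz : z = j := by
    refine (hMS z (by simp)).resolve_left fun hzi => ?_
    subst z
    have := lenIn_word_le hA.1 (S := {i, j}) (L := M) fun x hx => hMS x (by simp [hx])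
    simp at hlt
    omega
  subst z
  have hchain := isChain_ne_of_lenIn_eq hA.1 hMS (by rw [hML, hM])
  rw [eq_altList_of_isChain hchain fun x hx => (hMS x (by simp [hx])).symm] at hlt ⊢
  obtain ⟨hp, hq⟩ := dihedralOrbit_nonneg_of_lt_lenIn i j hA hij (by simpa using hlt)
  exact ⟨_, _, hp, hq, word_altList_apply_single hA.1 i j _⟩

end Dihedral

section Positivity

variable {A : Matrix (Fin n) (Fin n) ℤ}

/-- Choosing `v` of minimal length makes both `s i` and `s j` ascents of `v`. -/
lemma exists_dihedral_factor (h2 : ∀ i, A i i = 2) {w : G} (hw : w ∈ weyl A h2) (i j : Fin n)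
    (hj : len A h2 (w * s A h2 j) < len A h2 w) :
    ∃ v ∈ weyl A h2, ∃ L : List (Fin n), (∀ x ∈ L, x ∈ ({i, j} : Set (Fin n))) ∧
      w = v * word A h2 L ∧ len A h2 v + lenIn A h2 {i, j} (word A h2 L) ≤ len A h2 w ∧
      len A h2 v < len A h2 w ∧
      ∀ x ∈ ({i, j} : Set (Fin n)), len A h2 v < len A h2 (v * s A h2 x) := by
  let P (k : ℕ) := ∃ v ∈ weyl A h2, ∃ L : List (Fin n), (∀ x ∈ L, x ∈ ({i, j} : Set (Fin n))) ∧
    w = v * word A h2 L ∧ len A h2 v + lenIn A h2 {i, j} (word A h2 L) ≤ len A h2 w ∧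
    len A h2 v = k
  have hP : P (len A h2 (w * s A h2 j)) := by
    refine ⟨_, mul_mem hw (s_mem_weyl h2 j), [j], by simp, by simp, ?_, rfl⟩
    have := lenIn_s_le_one h2 (S := {i, j}) (i := j) (by simp)
    rw [word_singleton]
    omega
  classical
  obtain ⟨v, hv, L, hL, rfl, hvL, hk⟩ := Nat.find_spec ⟨_, hP⟩
  have hmin : len A h2 v ≤ len A h2 (v * word A h2 L * s A h2 j) := hk ▸ Nat.find_min' _ hP
  refine ⟨v, hv, L, hL, rfl, hvL, by omega, fun x hx => ?_⟩
  rcases len_mul_s_eq h2 hv x with hup | hdown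
  · omega
  have hPx : P (len A h2 (v * s A h2 x)) := by
    refine ⟨_, mul_mem hv (s_mem_weyl h2 x), x :: L, List.forall_mem_cons.mpr ⟨hx, hL⟩,
      by simp [← mul_assoc], ?_, rfl⟩
    have h₁ := lenIn_mul_le h2 (S := {i, j}) (L := [x]) (M := L) (by simpa) hL
    have h₂ := lenIn_s_le_one h2 hx
    simp only [word_singleton, ← word_cons] at h₁
    omega
  have := hk ▸ Nat.find_min' _ hPx
  omega

theorem nonneg_apply_single_of_len_lt (hA : IsGCM A) {w : G} (hw : w ∈ weyl A hA.1)
    {i : Fin n} (hi : len A hA.1 w < len A hA.1 (w * s A hA.1 i)) : 0 ≤ w (Pi.single i 1) := by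
  induction hk : len A hA.1 w using Nat.strong_induction_on generalizing w i with
  | _ k ih =>
  by_cases hw1 : w = 1
  · simp [hw1]
  obtain ⟨j, hj⟩ := exists_len_mul_s_lt hA.1 hw hw1
  have hij : i ≠ j := by rintro rfl; omega
  obtain ⟨v, hv, L, hL, rfl, hvL, hvw, hv_up⟩ := exists_dihedral_factor hA.1 hw i j (by omega)
  have hLi : lenIn A hA.1 {i, j} (word A hA.1 L) <
      lenIn A hA.1 {i, j} (word A hA.1 L * s A hA.1 i) := by
    rcases lenIn_mul_s_eq hA.1 hL (by simp : i ∈ ({i, j} : Set (Fin n))) with h | h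
    · omega
    have h₁ := len_mul_le hA.1 hv (word_mem_weyl hA.1 (L ++ [i]))
    have h₂ := len_le_lenIn hA.1 (S := {i, j}) (L := L ++ [i])
      (List.forall_mem_append.mpr ⟨hL, by simp⟩)
    simp only [word_append, word_singleton, ← mul_assoc] at h₁ h₂
    omega
  obtain ⟨p, q, hp, hq, hpq⟩ := exists_nonneg_word_apply_single i j hA hij hL hLi
  rw [LinearEquiv.mul_apply, hpq, map_add, map_zsmul, map_zsmul]
  exact add_nonneg (zsmul_nonneg (ih _ (hk ▸ hvw) hv (hv_up i (by simp)) rfl) hp)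
    (zsmul_nonneg (ih _ (hk ▸ hvw) hv (hv_up j (by simp)) rfl) hq)

end Positivity

section Roots

variable {A : Matrix (Fin n) (Fin n) ℤ}

lemma not_isPos_neg_of_isPos {v : Fin n → ℤ} (hv : IsPos v) : ¬IsPos (-v) := fun hnv =>
  hv.1 (funext fun p => le_antisymm (by simpa using hnv.2 p) (hv.2 p))

section RealRoots

variable (h2 : ∀ i, A i i = 2) {α : Fin n → ℤ}

lemma ne_zero_of_mem_realRoots (hα : α ∈ realRoots A h2) : α ≠ 0 := by
  obtain ⟨g, -, i, rfl⟩ := hα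
  simp

lemma apply_mem_realRoots (hα : α ∈ realRoots A h2) {g : G} (hg : g ∈ weyl A h2) :
    g α ∈ realRoots A h2 := by
  obtain ⟨g', hg', i, rfl⟩ := hα
  exact ⟨g * g', mul_mem hg hg', i, rfl⟩

lemma neg_mem_realRoots (hα : α ∈ realRoots A h2) : -α ∈ realRoots A h2 := by
  obtain ⟨g, hg, i, rfl⟩ := hα
  exact ⟨g * s A h2 i, mul_mem hg (s_mem_weyl h2 i), i, by simp [s_single_self]⟩

lemma eq_one_of_smul_single_mem_realRoots {c : ℤ} (hc : 0 ≤ c) {i : Fin n}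
    (h : c • Pi.single i 1 ∈ realRoots A h2) : c = 1 := by
  obtain ⟨g, -, l, hgl⟩ := h
  have hl := congr_fun (congr_arg g.symm hgl) l
  rw [map_zsmul, LinearEquiv.symm_apply_apply, Pi.smul_apply, Pi.single_eq_same,
    smul_eq_mul] at hl
  rcases Int.eq_one_or_neg_one_of_mul_eq_one hl with h | h <;> omega

lemma mem_negRoots_of_mem_realRoots (hsym : ∀ i j, A i j = 0 ↔ A j i = 0)
    (hα : α ∈ realRoots A h2) (hneg : IsPos (-α)) : α ∈ negRoots A h2 hsym :=
  ⟨Or.inl (Or.inl (neg_mem_realRoots h2 hα)), hneg⟩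

end RealRoots

variable (hA : IsGCM A) {α : Fin n → ℤ}

theorem isPos_or_isPos_neg_of_mem_realRoots (hα : α ∈ realRoots A hA.1) :
    IsPos α ∨ IsPos (-α) := by
  obtain ⟨g, hg, i, rfl⟩ := hα
  have hne := ne_zero_of_mem_realRoots hA.1 ⟨g, hg, i, rfl⟩
  rcases len_mul_s_eq hA.1 hg i with hup | hdown
  · exact Or.inl ⟨hne, nonneg_apply_single_of_len_lt hA hg (by omega)⟩
  · have := nonneg_apply_single_of_len_lt hA (mul_mem hg (s_mem_weyl hA.1 i)) (i := i)
      (by rw [mul_s_mul_s]; omega)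
    rw [LinearEquiv.mul_apply, s_single_self, map_neg] at this
    exact Or.inr ⟨neg_ne_zero.mpr hne, this⟩

lemma isPos_s_apply (hα : α ∈ realRoots A hA.1) (hpos : IsPos α) {i : Fin n}
    (hne : α ≠ Pi.single i 1) : IsPos (s A hA.1 i α) := by
  refine (isPos_or_isPos_neg_of_mem_realRoots hA
    (apply_mem_realRoots hA.1 hα (s_mem_weyl hA.1 i))).resolve_right fun hneg => hne ?_
  -- `s i` only changes the `i`-th coordinate, so `α` is supported on `i`
  have hsupp : ∀ p ≠ i, α p = 0 := fun p hp =>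
    le_antisymm (by simpa [s_apply, Pi.single_apply, hp] using hneg.2 p) (hpos.2 p)
  have hα_eq : α = α i • Pi.single i 1 := by
    ext p
    by_cases hp : p = i
    · simp [hp]
    · simp [hp, hsupp p hp]
  rw [hα_eq, eq_one_of_smul_single_mem_realRoots hA.1 (hpos.2 i) (hα_eq ▸ hα), one_smul]

theorem isPos_neg_mul_apply_of_len_mul_eq_add {u v : G} (hu : u ∈ weyl A hA.1)
    (hv : v ∈ weyl A hA.1) (hlen : len A hA.1 (u * v) = len A hA.1 u + len A hA.1 v)
    (hα : α ∈ realRoots A hA.1) (hpos : IsPos α) (hvα : IsPos (-v α)) :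
    IsPos (-(u * v) α) := by
  induction hk : len A hA.1 v using Nat.strong_induction_on generalizing v α with
  | _ k ih =>
  by_cases hv1 : v = 1
  · subst hv1
    exact absurd hvα (not_isPos_neg_of_isPos hpos)
  obtain ⟨j, hj⟩ := exists_len_mul_s_lt hA.1 hv hv1
  have hv' := mul_mem hv (s_mem_weyl hA.1 j)
  have hvv' : v * s A hA.1 j * s A hA.1 j = v := mul_s_mul_s hA.1 v j
  have huv' : len A hA.1 (u * (v * s A hA.1 j)) + 1 = len A hA.1 (u * v) := by
    have := len_mul_le hA.1 hu hv'
    have := len_mul_s_eq hA.1 (mul_mem hu hv') j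
    rw [mul_assoc, hvv'] at this
    omega
  by_cases hαj : α = Pi.single j 1
  · subst hαj
    have hnonneg := nonneg_apply_single_of_len_lt hA (mul_mem hu hv') (i := j)
      (by rw [mul_assoc, hvv']; omega)
    rw [← hvv', ← mul_assoc, LinearEquiv.mul_apply, s_single_self, map_neg, neg_neg]
    exact ⟨ne_zero_of_mem_realRoots hA.1 (apply_mem_realRoots hA.1 hα (mul_mem hu hv')),
      hnonneg⟩
  · have hsα : s A hA.1 j (s A hA.1 j α) = α := by
      rw [← LinearEquiv.mul_apply, s_mul_self]
      rfl
    have := ih _ (by omega) hv' (by omega) (apply_mem_realRoots hA.1 hα (s_mem_weyl hA.1 j))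
      (isPos_s_apply hA hα hpos hαj) (by rwa [LinearEquiv.mul_apply, hsα]) rfl
    rwa [← mul_assoc, LinearEquiv.mul_apply, hsα] at this

end Roots

theorem neg_iff_one_le_of_straight_general (n : ℕ) (A : Matrix (Fin n) (Fin n) ℤ)
    (hA : IsGCM A)
    (ω : (Fin n → ℤ) ≃ₗ[ℤ] (Fin n → ℤ)) (hω : ω ∈ weyl A hA.1)
    (hlen : ∀ l : ℤ, len A hA.1 (ω ^ l) = l.natAbs * len A hA.1 ω)
    (β : Fin n → ℤ) (hβre : β ∈ realRoots A hA.1) (hβ : β ∈ posRoots A hA.1 hA.2.2)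
    (hωβ : ω β ∈ negRoots A hA.1 hA.2.2) :
    ∀ l : ℤ, (ω ^ l) β ∈ negRoots A hA.1 hA.2.2 ↔ 1 ≤ l := by
  have hlen_succ (m : ℕ) : len A hA.1 (ω ^ (m + 1)) = len A hA.1 (ω ^ m) + len A hA.1 ω := by
    have hpow (k : ℕ) : len A hA.1 (ω ^ k) = k * len A hA.1 ω := by simpa using hlen k
    rw [hpow, hpow]
    ring
  intro l
  constructor
  · intro hl
    by_contra! hl1
    obtain ⟨m, rfl⟩ : ∃ m : ℕ, l = -m := ⟨l.natAbs, by omega⟩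
    have hωmγ : (ω ^ m) (-(ω ^ (-m : ℤ)) β) = -β := by
      rw [map_neg, ← LinearEquiv.mul_apply, _root_.zpow_neg, zpow_natCast, mul_inv_cancel]
      rfl
    have := isPos_neg_mul_apply_of_len_mul_eq_add hA hω (pow_mem hω m)
      (by rw [← pow_succ', hlen_succ, add_comm])
      (neg_mem_realRoots hA.1 (apply_mem_realRoots hA.1 hβre (zpow_mem hω _))) hl.2
      (by rw [hωmγ, neg_neg]; exact hβ.2)
    rw [LinearEquiv.mul_apply, hωmγ, map_neg, neg_neg] at this
    exact not_isPos_neg_of_isPos this hωβ.2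
  · intro hl
    obtain ⟨m, rfl⟩ : ∃ m : ℕ, l = (m + 1 : ℕ) := ⟨(l - 1).toNat, by omega⟩
    refine mem_negRoots_of_mem_realRoots hA.1 hA.2.2
      (apply_mem_realRoots hA.1 hβre (zpow_mem hω _)) ?_
    rw [zpow_natCast, pow_succ]
    exact isPos_neg_mul_apply_of_len_mul_eq_add hA (pow_mem hω m) hω
      (by rw [← pow_succ, hlen_succ]) hβre hβ.2 hωβ.2

/-- if `A` is indecomposable with infinite Weyl group, `ω ∈ W` satisfies
`ℓ(ω^l) = |l|·ℓ(ω)` for all `l ∈ ℤ`, and `β` is a real root in `Δ₊` with `ωβ ∈ Δ₋`, then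
for every integer `l`, `ω^l β ∈ Δ₋ ↔ l ≥ 1`. -/
theorem neg_iff_one_le_of_straight (n : ℕ) (hn : 1 ≤ n) (A : Matrix (Fin n) (Fin n) ℤ)
    (hA : IsGCM A) (hInd : Indecomposable A hA.2.2)
    (hWinf : Infinite (weyl A hA.1))
    (ω : (Fin n → ℤ) ≃ₗ[ℤ] (Fin n → ℤ)) (hω : ω ∈ weyl A hA.1)
    (hlen : ∀ l : ℤ, len A hA.1 (ω ^ l) = l.natAbs * len A hA.1 ω)
    (β : Fin n → ℤ) (hβre : β ∈ realRoots A hA.1) (hβ : β ∈ posRoots A hA.1 hA.2.2)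
    (hωβ : ω β ∈ negRoots A hA.1 hA.2.2) :
    ∀ l : ℤ, (ω ^ l) β ∈ negRoots A hA.1 hA.2.2 ↔ 1 ≤ l :=
  neg_iff_one_le_of_straight_general n A hA ω hω hlen β hβre hβ hωβ

end KacMoodyPaper
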